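/- The real 2×2 matrix M = [[−(1/4)·√((23−√17)/2), (−1−√17)/8], [(1+√17)/8, −(1/4)·√((23−√17)/2)]] is orthogonal, i.e. Mᵀ·M is the identity matrix. (This is the block of the vertical gauge transformation between the connections ραk and αραk for AH+1 with rows indexed by the edges c·c·a·ã·6, c·c·f·f·6 and columns by c·a·ã·6, c·f·f·6, from Appendix A of the paper.) -/
import Mathlib


open Matrix

/-- The block of the vertical gauge transformation between ραk and αραk for AH+1 with rows
c·c·a·ã·6, c·c·f·f·6 and columns c·a·ã·6, c·f·f·6. -/
noncomputable def M : Matrix (Fin 2) (Fin 2) ℝ :=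
  !![-(1 / 4) * Real.sqrt ((23 - Real.sqrt 17) / 2), (-1 - Real.sqrt 17) / 8;
     (1 + Real.sqrt 17) / 8, -(1 / 4) * Real.sqrt ((23 - Real.sqrt 17) / 2)]

/-- This block of the vertical gauge transformation is orthogonal. -/
theorem stmt_12 : Mᵀ * M = (1 : Matrix (Fin 2) (Fin 2) ℝ) := by
  have h17 : Real.sqrt 17 ^ 2 = 17 := Real.sq_sqrt (by norm_num)
  have hle : Real.sqrt 17 ≤ 23 := by
    nlinarith [Real.sqrt_nonneg 17]
  have hs : (Real.sqrt (23 - Real.sqrt 17) / Real.sqrt 2) ^ 2 = (23 - Real.sqrt 17) / 2 := by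
    rw [div_pow, Real.sq_sqrt (by linarith : (0:ℝ) ≤ 23 - Real.sqrt 17),
      Real.sq_sqrt (by norm_num : (0:ℝ) ≤ 2)]
  rw [M]
  ext i j
  fin_cases i <;> fin_cases j <;>
    simp [Matrix.mul_apply, Fin.sum_univ_succ, Matrix.one_apply] <;>
    nlinarith [hs, h17]
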